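/- arXiv:2101.04742 — 2 statements merged into one kernel-verified Lean document; each statement's English description precedes it below -/
import Mathlib

section
/- Modal Proposition Constant Substitution: If every environment σ ∈ β satisfies σ(x) = c, and there exists some σ ∈ β with σ(x) = c (so β is nonempty), then for every existential proposition p∃: β ⊨ p∃ if and only if β ⊨ p∃[c/x], where p∃[c/x] substitutes the constant c for the variable x throughout p∃. -/
namespace BLIMP

/-- Program variables. -/
abbrev Var := String
/-- Quantified variables (drawn from a set disjoint from the program
variables, which we model with a separate constructor). -/
abbrev QVar := String
/-- Values. -/
abbrev Val := ℤ
/-- An environment maps program variables to values. -/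
abbrev Env := Var → Val
/-- A belief state is a set of environments. -/
abbrev Belief := Set Env

/-- Expressions: program variables, constants, quantified variables, and
arithmetic operators. -/
inductive Exp
  | var (x : Var)
  | const (c : Val)
  | qvar (y : QVar)
  | add (e₁ e₂ : Exp)
  | sub (e₁ e₂ : Exp)
  | mul (e₁ e₂ : Exp)
  | div (e₁ e₂ : Exp)

/-- Big-step evaluation of expressions: `⟨σ, e⟩ ⇓ c` (there is no rule for
quantified variables, which must be substituted away before evaluation). -/
inductive Eval : Env → Exp → Val → Prop
  | var (σ : Env) (x : Var) : Eval σ (.var x) (σ x)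
  | const (σ : Env) (c : Val) : Eval σ (.const c) c
  | add {σ e₁ e₂ c₁ c₂} : Eval σ e₁ c₁ → Eval σ e₂ c₂ → Eval σ (.add e₁ e₂) (c₁ + c₂)
  | sub {σ e₁ e₂ c₁ c₂} : Eval σ e₁ c₁ → Eval σ e₂ c₂ → Eval σ (.sub e₁ e₂) (c₁ - c₂)
  | mul {σ e₁ e₂ c₁ c₂} : Eval σ e₁ c₁ → Eval σ e₂ c₂ → Eval σ (.mul e₁ e₂) (c₁ * c₂)
  | div {σ e₁ e₂ c₁ c₂} : Eval σ e₁ c₁ → Eval σ e₂ c₂ → Eval σ (.div e₁ e₂) (c₁ / c₂)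

/-- Propositions. -/
inductive Pprop
  | bconst (b : Bool)
  | lt (e₁ e₂ : Exp)
  | eq (e₁ e₂ : Exp)
  | and (p₁ p₂ : Pprop)
  | or (p₁ p₂ : Pprop)
  | not (p : Pprop)

/-- Satisfaction of a proposition by an environment: `σ ⊨ p`. -/
def Sat (σ : Env) : Pprop → Prop
  | .bconst b => b = true
  | .lt e₁ e₂ => ∃ c₁ c₂, Eval σ e₁ c₁ ∧ Eval σ e₂ c₂ ∧ c₁ < c₂
  | .eq e₁ e₂ => ∃ c₁ c₂, Eval σ e₁ c₁ ∧ Eval σ e₂ c₂ ∧ c₁ = c₂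
  | .and p₁ p₂ => Sat σ p₁ ∧ Sat σ p₂
  | .or p₁ p₂ => Sat σ p₁ ∨ Sat σ p₂
  | .not p => ¬ Sat σ p

/-- Modal propositions, built from `□p` and `◇p` by `&&`, `||`, `!`. -/
inductive MProp
  | box (p : Pprop)
  | dia (p : Pprop)
  | and (P₁ P₂ : MProp)
  | or (P₁ P₂ : MProp)
  | not (P : MProp)

/-- Satisfaction of a modal proposition by a belief state: `β ⊨ P□`. -/
def MSat (β : Belief) : MProp → Prop
  | .box p => ∀ σ ∈ β, Sat σ p
  | .dia p => ∃ σ ∈ β, Sat σ p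
  | .and P₁ P₂ => MSat β P₁ ∧ MSat β P₂
  | .or P₁ P₂ => MSat β P₁ ∨ MSat β P₂
  | .not P => ¬ MSat β P

/-- `e.substQ y c` substitutes the constant `c` for the quantified variable `y`. -/
def Exp.substQ : Exp → QVar → Val → Exp
  | .var x, _, _ => .var x
  | .const c', _, _ => .const c'
  | .qvar y', y, c => if y' = y then .const c else .qvar y'
  | .add e₁ e₂, y, c => .add (e₁.substQ y c) (e₂.substQ y c)
  | .sub e₁ e₂, y, c => .sub (e₁.substQ y c) (e₂.substQ y c)
  | .mul e₁ e₂, y, c => .mul (e₁.substQ y c) (e₂.substQ y c)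
  | .div e₁ e₂, y, c => .div (e₁.substQ y c) (e₂.substQ y c)

def Pprop.substQ : Pprop → QVar → Val → Pprop
  | .bconst b, _, _ => .bconst b
  | .lt e₁ e₂, y, c => .lt (e₁.substQ y c) (e₂.substQ y c)
  | .eq e₁ e₂, y, c => .eq (e₁.substQ y c) (e₂.substQ y c)
  | .and p₁ p₂, y, c => .and (p₁.substQ y c) (p₂.substQ y c)
  | .or p₁ p₂, y, c => .or (p₁.substQ y c) (p₂.substQ y c)
  | .not p, y, c => .not (p.substQ y c)

def MProp.substQ : MProp → QVar → Val → MProp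
  | .box p, y, c => .box (p.substQ y c)
  | .dia p, y, c => .dia (p.substQ y c)
  | .and P₁ P₂, y, c => .and (P₁.substQ y c) (P₂.substQ y c)
  | .or P₁ P₂, y, c => .or (P₁.substQ y c) (P₂.substQ y c)
  | .not P, y, c => .not (P.substQ y c)

/-- Satisfaction of an existential proposition `∃ ŷ. P□` by a belief state,
by recursion on the list of quantified variables. -/
def ESatAux (β : Belief) : List QVar → MProp → Prop
  | [], P => MSat β P
  | y :: ys, P => ∃ c : Val, ESatAux β ys (P.substQ y c)

/-- `e.substConst x c` substitutes the constant `c` for the program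
variable `x`. -/
def Exp.substConst : Exp → Var → Val → Exp
  | .var z, x, c => if z = x then .const c else .var z
  | .const c', _, _ => .const c'
  | .qvar y, _, _ => .qvar y
  | .add e₁ e₂, x, c => .add (e₁.substConst x c) (e₂.substConst x c)
  | .sub e₁ e₂, x, c => .sub (e₁.substConst x c) (e₂.substConst x c)
  | .mul e₁ e₂, x, c => .mul (e₁.substConst x c) (e₂.substConst x c)
  | .div e₁ e₂, x, c => .div (e₁.substConst x c) (e₂.substConst x c)

def Pprop.substConst : Pprop → Var → Val → Pprop
  | .bconst b, _, _ => .bconst b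
  | .lt e₁ e₂, x, c => .lt (e₁.substConst x c) (e₂.substConst x c)
  | .eq e₁ e₂, x, c => .eq (e₁.substConst x c) (e₂.substConst x c)
  | .and p₁ p₂, x, c => .and (p₁.substConst x c) (p₂.substConst x c)
  | .or p₁ p₂, x, c => .or (p₁.substConst x c) (p₂.substConst x c)
  | .not p, x, c => .not (p.substConst x c)

def MProp.substConst : MProp → Var → Val → MProp
  | .box p, x, c => .box (p.substConst x c)
  | .dia p, x, c => .dia (p.substConst x c)
  | .and P₁ P₂, x, c => .and (P₁.substConst x c) (P₂.substConst x c)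
  | .or P₁ P₂, x, c => .or (P₁.substConst x c) (P₂.substConst x c)
  | .not P, x, c => .not (P.substConst x c)

/-! Replacing `x` by `c` is invisible to every environment with `σ x = c`, hence to every
`□`/`◇` over such a belief state; and it commutes with instantiating quantified variables,
so it passes through the existential prefix. -/

section Substitution

variable {σ : Env} {x : Var} {c : Val}

lemma eval_substConst_iff (h : σ x = c) (e : Exp) (v : Val) :
    Eval σ (e.substConst x c) v ↔ Eval σ e v := by
  induction e generalizing v with
  | var z =>
    simp only [Exp.substConst]
    split_ifs with hz
    · subst hz h
      constructor <;> rintro ⟨⟩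
      exacts [.var σ z, .const σ (σ z)]
    · rfl
  | const | qvar => rfl
  | add _ _ ih₁ ih₂ | sub _ _ ih₁ ih₂ | mul _ _ ih₁ ih₂ | div _ _ ih₁ ih₂ =>
    constructor <;> rintro ⟨⟩ <;> constructor <;> simp only [ih₁, ih₂] at * <;> assumption

lemma sat_substConst_iff (h : σ x = c) (p : Pprop) :
    Sat σ (p.substConst x c) ↔ Sat σ p := by
  induction p with
  | bconst => rfl
  | lt | eq => simp only [Pprop.substConst, Sat, eval_substConst_iff h]
  | and _ _ ih₁ ih₂ | or _ _ ih₁ ih₂ => simp only [Pprop.substConst, Sat, ih₁, ih₂]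
  | not _ ih => simp only [Pprop.substConst, Sat, ih]

end Substitution

lemma msat_substConst_iff {β : Belief} {x : Var} {c : Val} (hall : ∀ σ ∈ β, σ x = c)
    (P : MProp) : MSat β (P.substConst x c) ↔ MSat β P := by
  induction P with
  | box p => exact forall₂_congr fun σ hσ => sat_substConst_iff (hall σ hσ) p
  | dia p =>
    exact exists_congr fun σ => and_congr_right fun hσ => sat_substConst_iff (hall σ hσ) p
  | and _ _ ih₁ ih₂ | or _ _ ih₁ ih₂ => simp only [MProp.substConst, MSat, ih₁, ih₂]
  | not _ ih => simp only [MProp.substConst, MSat, ih]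

section Commute

variable (y : QVar) (d : Val) (x : Var) (c : Val)

lemma Exp.substQ_substConst_comm (e : Exp) :
    (e.substQ y d).substConst x c = (e.substConst x c).substQ y d := by
  induction e with
  | var | qvar => simp only [Exp.substQ, Exp.substConst]; split <;> rfl
  | const => rfl
  | add _ _ ih₁ ih₂ | sub _ _ ih₁ ih₂ | mul _ _ ih₁ ih₂ | div _ _ ih₁ ih₂ =>
    simp only [Exp.substQ, Exp.substConst, ih₁, ih₂]

lemma Pprop.substQ_substConst_comm (p : Pprop) :
    (p.substQ y d).substConst x c = (p.substConst x c).substQ y d := by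
  induction p with
  | bconst => rfl
  | lt | eq => simp only [Pprop.substQ, Pprop.substConst, Exp.substQ_substConst_comm]
  | and _ _ ih₁ ih₂ | or _ _ ih₁ ih₂ =>
    simp only [Pprop.substQ, Pprop.substConst, ih₁, ih₂]
  | not _ ih => simp only [Pprop.substQ, Pprop.substConst, ih]

lemma MProp.substQ_substConst_comm (P : MProp) :
    (P.substQ y d).substConst x c = (P.substConst x c).substQ y d := by
  induction P with
  | box | dia => simp only [MProp.substQ, MProp.substConst, Pprop.substQ_substConst_comm]
  | and _ _ ih₁ ih₂ | or _ _ ih₁ ih₂ =>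
    simp only [MProp.substQ, MProp.substConst, ih₁, ih₂]
  | not _ ih => simp only [MProp.substQ, MProp.substConst, ih]

end Commute

theorem modal_proposition_constant_substitution_general
    (β : Belief) (x : Var) (c : Val)
    (hall : ∀ σ ∈ β, σ x = c)
    (ys : List QVar) (P : MProp) :
    ESatAux β ys P ↔ ESatAux β ys (P.substConst x c) := by
  induction ys generalizing P with
  | nil => exact (msat_substConst_iff hall P).symm
  | cons y ys ih =>
    refine exists_congr fun d => ?_
    rw [ih, MProp.substQ_substConst_comm]

/-- **Modal Proposition Constant Substitution**: if every environment `σ ∈ β`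
has `σ(x) = c`, and some environment `σ ∈ β` has `σ(x) = c` (so `β` is
nonempty), then for every existential proposition `p∃ = ∃ ŷ. P□`:
`β ⊨ p∃ ↔ β ⊨ p∃[c/x]`, where the substitution replaces the program variable
`x` by the constant `c` throughout `p∃`. -/
theorem modal_proposition_constant_substitution
    (β : Belief) (x : Var) (c : Val)
    (hall : ∀ σ ∈ β, σ x = c) (hex : ∃ σ ∈ β, σ x = c)
    (ys : List QVar) (P : MProp) :
    ESatAux β ys P ↔ ESatAux β ys (P.substConst x c) :=
  modal_proposition_constant_substitution_general β x c hall ys P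

end BLIMP
end

section
/- Environment Independence: Let p be a proposition that contains no program variables (p mentions only quantified variables and constants, so its truth under an environment is independent of the environment). Then for every belief state β, modal proposition P□, and list of quantified variables ŷ: if β ⊨ ∃ ŷ. P□ && ◇p then β ⊨ ∃ ŷ. P□ && □p. -/
namespace BLIMP

/-- `e.HasProgVar` holds iff some program variable occurs in `e`. -/
def Exp.HasProgVar : Exp → Prop
  | .var _ => True
  | .const _ => False
  | .qvar _ => False
  | .add e₁ e₂ => e₁.HasProgVar ∨ e₂.HasProgVar
  | .sub e₁ e₂ => e₁.HasProgVar ∨ e₂.HasProgVar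
  | .mul e₁ e₂ => e₁.HasProgVar ∨ e₂.HasProgVar
  | .div e₁ e₂ => e₁.HasProgVar ∨ e₂.HasProgVar

/-- `p.HasProgVar` holds iff some program variable occurs in `p`.
A proposition *contains no program variables* iff `¬ p.HasProgVar`. -/
def Pprop.HasProgVar : Pprop → Prop
  | .bconst _ => False
  | .lt e₁ e₂ => e₁.HasProgVar ∨ e₂.HasProgVar
  | .eq e₁ e₂ => e₁.HasProgVar ∨ e₂.HasProgVar
  | .and p₁ p₂ => p₁.HasProgVar ∨ p₂.HasProgVar
  | .or p₁ p₂ => p₁.HasProgVar ∨ p₂.HasProgVar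
  | .not p => p.HasProgVar


theorem Eval.of_not_hasProgVar {σ σ' : Env} {e : Exp} {c : Val}
    (he : ¬ e.HasProgVar) (h : Eval σ e c) : Eval σ' e c := by
  induction h with
  | var => exact absurd trivial he
  | const => exact .const _ _
  | add _ _ ih₁ ih₂ | sub _ _ ih₁ ih₂ | mul _ _ ih₁ ih₂ | div _ _ ih₁ ih₂ =>
    rw [Exp.HasProgVar, not_or] at he
    constructor
    exacts [ih₁ he.1, ih₂ he.2]

theorem eval_iff_of_not_hasProgVar {σ σ' : Env} {e : Exp} {c : Val}
    (he : ¬ e.HasProgVar) : Eval σ e c ↔ Eval σ' e c :=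
  ⟨Eval.of_not_hasProgVar he, Eval.of_not_hasProgVar he⟩

theorem sat_iff_of_not_hasProgVar {σ σ' : Env} {p : Pprop}
    (hp : ¬ p.HasProgVar) : Sat σ p ↔ Sat σ' p := by
  induction p with
  | bconst => rfl
  | lt e₁ e₂ | eq e₁ e₂ =>
    rw [Pprop.HasProgVar, not_or] at hp
    simp only [Sat, eval_iff_of_not_hasProgVar (σ' := σ') hp.1,
      eval_iff_of_not_hasProgVar (σ' := σ') hp.2]
  | and p₁ p₂ ih₁ ih₂ | or p₁ p₂ ih₁ ih₂ =>
    rw [Pprop.HasProgVar, not_or] at hp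
    simp only [Sat, ih₁ hp.1, ih₂ hp.2]
  | not p ih => exact not_congr (ih hp)

@[simp]
theorem Exp.hasProgVar_substQ (e : Exp) (y : QVar) (c : Val) :
    (e.substQ y c).HasProgVar ↔ e.HasProgVar := by
  induction e with
  | qvar y' =>
    simp only [Exp.substQ]
    split <;> rfl
  | _ => simp_all [Exp.substQ, Exp.HasProgVar]

@[simp]
theorem Pprop.hasProgVar_substQ (p : Pprop) (y : QVar) (c : Val) :
    (p.substQ y c).HasProgVar ↔ p.HasProgVar := by
  induction p <;> simp_all [Pprop.substQ, Pprop.HasProgVar]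

theorem msat_box_of_msat_dia {β : Belief} {p : Pprop} (hp : ¬ p.HasProgVar)
    (h : MSat β (.dia p)) : MSat β (.box p) := by
  obtain ⟨σ, -, hσ⟩ := h
  exact fun σ' _ => (sat_iff_of_not_hasProgVar hp).mp hσ

/-- **Environment Independence** (Theorem B.6): if the proposition `p`
contains no program variables (it mentions only quantified variables and
constants), then `β ⊨ ∃ ŷ. P□ && ◇p` implies `β ⊨ ∃ ŷ. P□ && □p`. -/
theorem environment_independence
    (p : Pprop) (hp : ¬ p.HasProgVar)
    (β : Belief) (ys : List QVar) (P : MProp)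
    (h : ESatAux β ys (.and P (.dia p))) :
    ESatAux β ys (.and P (.box p)) := by
  induction ys generalizing p P with
  | nil => exact ⟨h.1, msat_box_of_msat_dia hp h.2⟩
  | cons y ys ih =>
    obtain ⟨c, hc⟩ := h
    exact ⟨c, ih _ (by simpa using hp) _ hc⟩

end BLIMP
end
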